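/- Let δ be a positive integer divisible by 6 and let Q ∈ ℤ[T]. For an integer t with Q(t) ≠ 0, define h(t) = ∏ (−3/p), the product running over all primes p not dividing δ such that ν_p(Q(t)) ≡ 2 or 4 (mod 6). Let t₁, t₂ be integers, c a nonzero integer, and l, l' squarefree integers such that Q(t₁) = c²·l with gcd(c,l) = 1 and Q(t₂) = c²·l' with gcd(c,l') = 1. Then h(t₁) = h(t₂). -/

import Mathlib

/-- The corrective term `h(t) = ∏ (-3/p)`, the product running over the primes `p ∤ δ`
with `ν_p(Q(t)) ≡ 2, 4 (mod 6)` (types `II`, `II*`, `IV`, `IV*`). -/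
def corrTerm (δ : ℕ) (Q : Polynomial ℤ) (t : ℤ) : ℤ :=
  ∏ p ∈ ((Q.eval t).natAbs.primeFactors.filter
    (fun p => ¬ p ∣ δ ∧
      (padicValInt p (Q.eval t) % 6 = 2 ∨ padicValInt p (Q.eval t) % 6 = 4))),
    if hp : p.Prime then @legendreSym p ⟨hp⟩ (-3) else 1

/-!
For a prime `p`, `ν_p(c² l) = 2 ν_p(c) + ν_p(l)` with `ν_p(l) ≤ 1`, and `ν_p(l) = 1` forces
`ν_p(c) = 0` by coprimality. Hence `ν_p(c² l) ≡ 2, 4 (mod 6)` iff `2 ν_p(c) ≡ 2, 4 (mod 6)`, so the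
primes entering `h` are determined by `c` alone.
-/

variable {p : ℕ}

lemma padicValInt_le_one_of_squarefree [Fact p.Prime] {l : ℤ} (hl : Squarefree l) :
    padicValInt p l ≤ 1 := by
  rw [padicValInt, ← Nat.factorization_def _ Fact.out]
  exact (Int.squarefree_natAbs.2 hl).natFactorization_le_one p

lemma padicValInt_eq_zero_or_of_gcd_eq_one {c l : ℤ} (hcl : Int.gcd c l = 1) :
    padicValInt p c = 0 ∨ padicValInt p l = 0 := by
  by_cases hp : p = 1
  · simp [padicValInt.eq_zero_iff, hp]
  by_contra! h
  simp only [ne_eq, padicValInt.eq_zero_iff, hp, false_or, not_or, not_not] at h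
  have : (p : ℤ) ∣ (Int.gcd c l : ℤ) := Int.dvd_coe_gcd h.1.2 h.2.2
  rw [hcl, Nat.cast_one, Int.natCast_dvd_ofNat, Nat.dvd_one] at this
  exact hp this

lemma padicValInt_sq_mul_mod_six_iff [Fact p.Prime] {c l : ℤ} (hc : c ≠ 0)
    (hl : Squarefree l) (hcl : Int.gcd c l = 1) :
    (padicValInt p (c ^ 2 * l) % 6 = 2 ∨ padicValInt p (c ^ 2 * l) % 6 = 4) ↔
      (2 * padicValInt p c % 6 = 2 ∨ 2 * padicValInt p c % 6 = 4) := by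
  have hmul : padicValInt p (c ^ 2 * l) = 2 * padicValInt p c + padicValInt p l := by
    rw [padicValInt.mul (pow_ne_zero 2 hc) hl.ne_zero, sq, padicValInt.mul hc hc, two_mul]
  have := padicValInt_le_one_of_squarefree (p := p) hl
  have := padicValInt_eq_zero_or_of_gcd_eq_one (p := p) hcl
  omega

lemma mem_primeFactors_natAbs_of_padicValInt_ne_zero (hp : p.Prime) {n : ℤ}
    (h : padicValInt p n ≠ 0) : p ∈ n.natAbs.primeFactors := by
  rwa [← Nat.support_factorization, Finsupp.mem_support_iff, Nat.factorization_def _ hp]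

theorem stmt_16_general (δ : ℕ) (Q : Polynomial ℤ)
    (t₁ t₂ c l l' : ℤ) (hc : c ≠ 0) (hl : Squarefree l) (hl' : Squarefree l')
    (h1 : Q.eval t₁ = c ^ 2 * l) (hcl : Int.gcd c l = 1)
    (h2 : Q.eval t₂ = c ^ 2 * l') (hcl' : Int.gcd c l' = 1) :
    corrTerm δ Q t₁ = corrTerm δ Q t₂ := by
  unfold corrTerm
  rw [h1, h2]
  congr 1
  ext p
  have mem_filter_iff : ∀ l : ℤ, Squarefree l → Int.gcd c l = 1 →
      ((p ∈ (c ^ 2 * l).natAbs.primeFactors ∧ ¬ p ∣ δ ∧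
        (padicValInt p (c ^ 2 * l) % 6 = 2 ∨ padicValInt p (c ^ 2 * l) % 6 = 4)) ↔
      (p.Prime ∧ ¬ p ∣ δ ∧ (2 * padicValInt p c % 6 = 2 ∨ 2 * padicValInt p c % 6 = 4))) := by
    intro l hl hcl
    constructor
    · rintro ⟨hmem, hδp, hmod⟩
      have hp := Nat.prime_of_mem_primeFactors hmem
      have := Fact.mk hp
      exact ⟨hp, hδp, (padicValInt_sq_mul_mod_six_iff hc hl hcl).1 hmod⟩
    · rintro ⟨hp, hδp, hmod⟩
      have := Fact.mk hp
      have hmod' := (padicValInt_sq_mul_mod_six_iff hc hl hcl).2 hmod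
      exact ⟨mem_primeFactors_natAbs_of_padicValInt_ne_zero hp (by omega), hδp, hmod'⟩
  simp only [Finset.mem_filter]
  rw [mem_filter_iff l hl hcl, mem_filter_iff l' hl' hcl']

/-- Invariance of the corrective term when the square parts agree (`q₀ = 1` case). -/
theorem stmt_16 (δ : ℕ) (hδ : 0 < δ) (h6 : 6 ∣ δ) (Q : Polynomial ℤ)
    (t₁ t₂ c l l' : ℤ) (hc : c ≠ 0) (hl : Squarefree l) (hl' : Squarefree l')
    (h1 : Q.eval t₁ = c ^ 2 * l) (hcl : Int.gcd c l = 1)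
    (h2 : Q.eval t₂ = c ^ 2 * l') (hcl' : Int.gcd c l' = 1) :
    corrTerm δ Q t₁ = corrTerm δ Q t₂ :=
  stmt_16_general δ Q t₁ t₂ c l l' hc hl hl' h1 hcl h2 hcl'
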